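/- arXiv:2208.09993 — 4 statements merged into one kernel-verified Lean document; each statement's English description precedes it below -/
import Mathlib

section
/- If Γ' is obtained from a graph Γ by deleting an edge (keeping the same vertex set), and Γ has no isolated vertices, then SO(Γ') < SO(Γ). -/
open SimpleGraph

noncomputable def somborIndex {V : Type*} [Fintype V] (G : SimpleGraph V) : ℝ :=
  letI := Classical.decEq V
  letI : DecidableRel G.Adj := Classical.decRel _
  ∑ e ∈ G.edgeFinset,
    Sym2.lift ⟨fun u v => Real.sqrt ((G.degree u : ℝ) ^ 2 + (G.degree v : ℝ) ^ 2),
      fun u v => by dsimp only; rw [add_comm]⟩ e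

namespace SimpleGraph

variable {V : Type*}

lemma deleteEdges_singleton_lt {G : SimpleGraph V} {u v : V} (huv : G.Adj u v) :
    G.deleteEdges {s(u, v)} < G :=
  (G.deleteEdges_le _).lt_of_ne fun h =>
    Set.disjoint_singleton_right.mp (deleteEdges_eq_self.mp h) (G.mem_edgeSet.mpr huv)

lemma degree_mono {G H : SimpleGraph V} (h : H ≤ G) (v : V) [Fintype (H.neighborSet v)]
    [Fintype (G.neighborSet v)] : H.degree v ≤ G.degree v :=
  Finset.card_le_card fun w => by simpa using @h v w

end SimpleGraph

section Sombor

variable {V : Type*} [Fintype V]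

open Classical

noncomputable def somborWeight (G : SimpleGraph V) : Sym2 V → ℝ :=
  Sym2.lift ⟨fun u v => √((G.degree u : ℝ) ^ 2 + (G.degree v : ℝ) ^ 2),
    fun u v => by dsimp only; rw [add_comm]⟩

lemma somborIndex_eq_sum_somborWeight (G : SimpleGraph V) :
    somborIndex G = ∑ e ∈ G.edgeFinset, somborWeight G e :=
  rfl

lemma somborWeight_nonneg (G : SimpleGraph V) (e : Sym2 V) : 0 ≤ somborWeight G e := by
  induction e using Sym2.ind with
  | _ a b => exact Real.sqrt_nonneg _

lemma somborWeight_pos {G : SimpleGraph V} {e : Sym2 V} (he : e ∈ G.edgeSet) :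
    0 < somborWeight G e := by
  induction e using Sym2.ind with
  | _ a b =>
    have hdeg : 0 < G.degree a := (G.mem_edgeSet.mp he).degree_pos_left
    exact Real.sqrt_pos.mpr (by positivity)

lemma somborWeight_mono {G H : SimpleGraph V} (h : H ≤ G) (e : Sym2 V) :
    somborWeight H e ≤ somborWeight G e := by
  induction e using Sym2.ind with
  | _ a b =>
    have ha := degree_mono h a
    have hb := degree_mono h b
    exact Real.sqrt_le_sqrt (by gcongr)

/-- Deleting edges both removes positive summands and lowers the degrees in the remaining ones. -/
theorem somborIndex_strictMono : StrictMono (somborIndex : SimpleGraph V → ℝ) := by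
  intro H G h
  obtain ⟨e, heG, heH⟩ := Finset.exists_of_ssubset (edgeFinset_strict_mono h)
  calc somborIndex H = ∑ e ∈ H.edgeFinset, somborWeight H e := somborIndex_eq_sum_somborWeight H
    _ ≤ ∑ e ∈ H.edgeFinset, somborWeight G e :=
      Finset.sum_le_sum fun e _ => somborWeight_mono h.le e
    _ < ∑ e ∈ G.edgeFinset, somborWeight G e :=
      Finset.sum_lt_sum_of_subset (edgeFinset_mono h.le) heG heH
        (somborWeight_pos (G.mem_edgeFinset.mp heG)) fun e _ _ => somborWeight_nonneg G e
    _ = somborIndex G := (somborIndex_eq_sum_somborWeight G).symm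

end Sombor

theorem sombor_deleteEdge_lt_general {V : Type*} [Fintype V] (G : SimpleGraph V) (u v : V)
    (huv : G.Adj u v) :
    somborIndex (G.deleteEdges {s(u, v)}) < somborIndex G :=
  somborIndex_strictMono (deleteEdges_singleton_lt huv)

theorem sombor_deleteEdge_lt {V : Type*} [Fintype V] (G : SimpleGraph V) (u v : V)
    (huv : G.Adj u v) (hiso : ∀ w : V, (G.neighborSet w).Nonempty) :
    somborIndex (G.deleteEdges {s(u, v)}) < somborIndex G :=
  sombor_deleteEdge_lt_general G u v huv
end

section
/- For every connected bridgeless graph Γ on n ≥ 3 vertices, SO(Γ) ≥ √8 · n, with equality if and only if Γ is the cycle C_n. -/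
/-!
Bridgelessness forces every vertex to have degree at least `2`. Then every edge contributes at
least `√(2² + 2²) = √8` to the Sombor index, and the handshake lemma gives at least as many edges
as vertices. Equality in both bounds forces `G` to be `2`-regular, and a connected `2`-regular
graph is a single Hamiltonian cycle, hence isomorphic to `C_n`.
-/

open SimpleGraph

namespace SimpleGraph

open Finset

variable {V W : Type*} {G : SimpleGraph V} {H : SimpleGraph W}

lemma two_le_degree_of_forall_not_isBridge [Nontrivial V] (hG : G.Preconnected)
    (hG' : ∀ e ∈ G.edgeSet, ¬ G.IsBridge e) (v : V) [Fintype (G.neighborSet v)] :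
    2 ≤ G.degree v := by
  obtain ⟨w, hvw⟩ := G.degree_pos_iff_exists_adj v |>.mp (hG.degree_pos_of_nontrivial v)
  have : G.IsEdgeReachable 2 v w := by
    simpa [isBridge_iff_not_isEdgeReachable_two hvw] using hG' s(v, w) hvw
  exact this.le_degree hvw.ne

lemma Iso.degree_apply (φ : G ≃g H) (v : V) [Fintype (G.neighborSet v)]
    [Fintype (H.neighborSet (φ v))] : H.degree (φ v) = G.degree v := by
  simp only [← card_neighborSet_eq_degree]
  exact Fintype.card_congr (φ.mapNeighborSet v).symm

lemma IsRegularOfDegree.of_iso [G.LocallyFinite] [H.LocallyFinite] {k : ℕ}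
    (h : H.IsRegularOfDegree k) (φ : G ≃g H) : G.IsRegularOfDegree k :=
  fun v => (φ.degree_apply v).symm.trans (h (φ v))

lemma cycleGraph_isRegularOfDegree_two {n : ℕ} (hn : 3 ≤ n) :
    (cycleGraph n).IsRegularOfDegree 2 := by
  obtain ⟨m, rfl⟩ := Nat.exists_eq_add_of_le' hn
  exact fun _ => cycleGraph_degree_three_le

lemma IsRegularOfDegree.isCycles [G.LocallyFinite] (h : G.IsRegularOfDegree 2) :
    G.IsCycles := by
  intro v _
  rw [← coe_neighborFinset, Set.ncard_coe_finset, card_neighborFinset_eq_degree, h v]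

lemma Hom.adj_iff_of_degree_le [G.LocallyFinite] [H.LocallyFinite] (f : G →g H)
    (hf : Function.Injective f) (hdeg : ∀ v, H.degree (f v) ≤ G.degree v) {v w : V} :
    H.Adj (f v) (f w) ↔ G.Adj v w := by
  refine ⟨fun hadj => ?_, f.map_adj⟩
  have hsub : (G.neighborFinset v).map ⟨f, hf⟩ ⊆ H.neighborFinset (f v) := by
    intro x hx
    obtain ⟨u, hu, rfl⟩ := mem_map.mp hx
    simpa using f.map_adj ((G.mem_neighborFinset v u).mp hu)
  have hmap : (G.neighborFinset v).map ⟨f, hf⟩ = H.neighborFinset (f v) :=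
    eq_of_subset_of_card_le hsub (by simpa using hdeg v)
  obtain ⟨u, hu, hfu⟩ := mem_map.mp (hmap ▸ (H.mem_neighborFinset _ _).mpr hadj)
  rwa [← hf hfu, ← G.mem_neighborFinset]

variable [Fintype V] [DecidableRel G.Adj]

lemma mul_card_le_two_mul_card_edgeFinset {k : ℕ} (h : ∀ v, k ≤ G.degree v) :
    k * Fintype.card V ≤ 2 * #G.edgeFinset := by
  rw [← sum_degrees_eq_twice_card_edges, mul_comm, ← smul_eq_mul, ← card_univ, ← sum_const]
  exact sum_le_sum fun v _ => h v

lemma isRegularOfDegree_of_two_mul_card_edgeFinset_le {k : ℕ} (h : ∀ v, k ≤ G.degree v)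
    (hE : 2 * #G.edgeFinset ≤ k * Fintype.card V) : G.IsRegularOfDegree k := by
  rw [← sum_degrees_eq_twice_card_edges, mul_comm, ← smul_eq_mul, ← card_univ, ← sum_const] at hE
  have := (sum_eq_sum_iff_of_le fun v _ => h v).mp (hE.antisymm' (sum_le_sum fun v _ => h v))
  exact fun v => (this v (mem_univ v)).symm

lemma IsRegularOfDegree.two_mul_card_edgeFinset {k : ℕ} (h : G.IsRegularOfDegree k) :
    2 * #G.edgeFinset = k * Fintype.card V := by
  simp [← sum_degrees_eq_twice_card_edges, h.degree_eq, mul_comm]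

lemma Connected.exists_isHamiltonianCycle_of_isRegularOfDegree_two [DecidableEq V]
    (hG : G.Connected) (h : G.IsRegularOfDegree 2) :
    ∃ (v : V) (p : G.Walk v v), p.IsHamiltonianCycle := by
  obtain ⟨v⟩ := hG.nonempty
  have hv : (G.neighborSet v).Nonempty := by
    rw [← degree_pos_iff_nonempty, h v]
    norm_num
  obtain ⟨p, hp, hverts⟩ := h.isCycles.exists_cycle_toSubgraph_verts_eq_connectedComponentSupp
    (c := G.connectedComponentMk v) rfl hv
  have hsupp (w : V) : w ∈ p.support := by
    rw [← Walk.mem_verts_toSubgraph, hverts, ConnectedComponent.mem_supp_iff,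
      ConnectedComponent.eq]
    exact hG.preconnected w v
  refine ⟨v, p, hp, hp.isPath_tail.isHamiltonian_of_mem fun w => ?_⟩
  rw [Walk.support_tail_of_not_nil _ hp.not_nil]
  obtain rfl | hw := eq_or_ne w v
  · exact Walk.end_mem_tail_support hp.not_nil
  · exact (p.mem_support_iff.mp (hsupp w)).resolve_left hw

lemma Connected.nonempty_iso_cycleGraph_of_isRegularOfDegree_two [DecidableEq V]
    (hG : G.Connected) (h : G.IsRegularOfDegree 2) :
    Nonempty (G ≃g cycleGraph (Fintype.card V)) := by
  obtain ⟨v, p, hp⟩ := hG.exists_isHamiltonianCycle_of_isRegularOfDegree_two h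
  have hn : 3 ≤ Fintype.card V := hp.length_eq ▸ hp.isCycle.three_le_length
  obtain ⟨f⟩ := (cycleGraph_isContained_iff hn).mpr ⟨v, p, hp.isCycle, hp.length_eq⟩
  have hbij : Function.Bijective f :=
    (Fintype.bijective_iff_injective_and_card f).mpr ⟨f.injective, by simp⟩
  have hdeg (i : Fin (Fintype.card V)) : G.degree (f i) ≤ (cycleGraph _).degree i := by
    rw [h, cycleGraph_isRegularOfDegree_two hn]
  exact ⟨(⟨Equiv.ofBijective f hbij, f.toHom.adj_iff_of_degree_le f.injective hdeg⟩ :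
    cycleGraph _ ≃g G).symm⟩

end SimpleGraph

open SimpleGraph Finset

section Sombor

variable {V : Type*} [Fintype V] {G : SimpleGraph V} [DecidableRel G.Adj]

/-- `somborIndex` unfolded with the decidability instances in scope rather than classical ones. -/
lemma somborIndex_eq_sum :
    somborIndex G = ∑ e ∈ G.edgeFinset, Sym2.lift
      ⟨fun u v => √((G.degree u : ℝ) ^ 2 + (G.degree v : ℝ) ^ 2),
        fun u v => by dsimp only; rw [add_comm]⟩ e := by
  unfold somborIndex
  congr!

lemma card_edgeFinset_mul_le_somborIndex {k : ℕ} (h : ∀ v, k ≤ G.degree v) :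
    #G.edgeFinset * √(2 * k ^ 2) ≤ somborIndex G := by
  rw [somborIndex_eq_sum, ← nsmul_eq_mul]
  refine card_nsmul_le_sum _ _ _ fun e _ => ?_
  induction e using Sym2.ind with | h u v => ?_
  have hu : (k : ℝ) ≤ G.degree u := by exact_mod_cast h u
  have hv : (k : ℝ) ≤ G.degree v := by exact_mod_cast h v
  rw [Sym2.lift_mk]
  exact Real.sqrt_le_sqrt (by nlinarith)

lemma somborIndex_eq_of_isRegularOfDegree {k : ℕ} (h : G.IsRegularOfDegree k) :
    somborIndex G = #G.edgeFinset * √(2 * k ^ 2) := by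
  rw [somborIndex_eq_sum, ← nsmul_eq_mul, ← sum_const]
  refine sum_congr rfl fun e _ => ?_
  induction e using Sym2.ind with | h u v => ?_
  simp only [Sym2.lift_mk, h.degree_eq, two_mul]

lemma sqrt_eight_mul_card_edgeFinset_le_somborIndex (h : ∀ v, 2 ≤ G.degree v) :
    √8 * #G.edgeFinset ≤ somborIndex G := by
  have := card_edgeFinset_mul_le_somborIndex h
  norm_num at this
  linarith

lemma sqrt_eight_mul_card_le_somborIndex (h : ∀ v, 2 ≤ G.degree v) :
    √8 * Fintype.card V ≤ somborIndex G := by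
  have hVE := mul_card_le_two_mul_card_edgeFinset h
  calc √8 * Fintype.card V ≤ √8 * #G.edgeFinset := by
        gcongr
        exact_mod_cast (by omega : Fintype.card V ≤ #G.edgeFinset)
    _ ≤ somborIndex G := sqrt_eight_mul_card_edgeFinset_le_somborIndex h

lemma isRegularOfDegree_two_of_somborIndex_le (h : ∀ v, 2 ≤ G.degree v)
    (hSO : somborIndex G ≤ √8 * Fintype.card V) : G.IsRegularOfDegree 2 := by
  have hEV : #G.edgeFinset ≤ Fintype.card V := by
    exact_mod_cast le_of_mul_le_mul_left
      ((sqrt_eight_mul_card_edgeFinset_le_somborIndex h).trans hSO) (by positivity)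
  exact isRegularOfDegree_of_two_mul_card_edgeFinset_le h (by omega)

lemma somborIndex_eq_of_isRegularOfDegree_two (h : G.IsRegularOfDegree 2) :
    somborIndex G = √8 * Fintype.card V := by
  have hE := h.two_mul_card_edgeFinset
  rw [somborIndex_eq_of_isRegularOfDegree h, mul_comm]
  norm_num
  omega

end Sombor

theorem sombor_bridgeless {V : Type*} [Fintype V] (G : SimpleGraph V)
    (hn : 3 ≤ Fintype.card V) (hconn : G.Connected)
    (hbridgeless : ∀ e ∈ G.edgeSet, ¬ G.IsBridge e) :
    Real.sqrt 8 * (Fintype.card V : ℝ) ≤ somborIndex G ∧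
      (somborIndex G = Real.sqrt 8 * (Fintype.card V : ℝ) ↔
        Nonempty (G ≃g SimpleGraph.cycleGraph (Fintype.card V))) := by
  classical
  have : Nontrivial V := Fintype.one_lt_card_iff_nontrivial.mp (by omega)
  have hδ (v : V) : 2 ≤ G.degree v :=
    two_le_degree_of_forall_not_isBridge hconn.preconnected hbridgeless v
  refine ⟨sqrt_eight_mul_card_le_somborIndex hδ, fun heq => ?_, fun ⟨φ⟩ => ?_⟩
  · exact hconn.nonempty_iso_cycleGraph_of_isRegularOfDegree_two
      (isRegularOfDegree_two_of_somborIndex_le hδ heq.le)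
  · exact somborIndex_eq_of_isRegularOfDegree_two
      ((cycleGraph_isRegularOfDegree_two hn).of_iso φ)
end

section
/- Let k₁ ≥ k₂ ≥ 2 and k ≥ 1 be positive integers with n = k₁ + k + k₂, and define f(k₁,k₂) = √2·C(k₁,2)·(k+k₁−1) + √2·C(k,2)·(n−1) + √2·C(k₂,2)·(k+k₂−1) + k·k₁·√((n−1)² + (k+k₁−1)²) + k·k₂·√((n−1)² + (k+k₂−1)²). Then f(k₁+1, k₂−1) > f(k₁, k₂). -/
open SimpleGraph

/-- The Sombor index of the join (K_a ∪ K_b) ∨ K_k, as a function of a and b,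
where n is the total number of vertices. -/
noncomputable def fSombor (k n a b : ℕ) : ℝ :=
  Real.sqrt 2 * (a.choose 2 : ℝ) * ((k : ℝ) + a - 1) +
    Real.sqrt 2 * (k.choose 2 : ℝ) * ((n : ℝ) - 1) +
    Real.sqrt 2 * (b.choose 2 : ℝ) * ((k : ℝ) + b - 1) +
    (k : ℝ) * a * Real.sqrt (((n : ℝ) - 1) ^ 2 + ((k : ℝ) + a - 1) ^ 2) +
    (k : ℝ) * b * Real.sqrt (((n : ℝ) - 1) ^ 2 + ((k : ℝ) + b - 1) ^ 2)

/-!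
Write `f(a, b) = g(a) + C + g(b)`, where `g(a)` is the contribution of the edges meeting
`K_a`. Since `k₂ - 1 < k₁`, the claim is the increment inequality
`g(k₂) - g(k₂ - 1) < g(k₁ + 1) - g(k₁)`. The cubic part of `g` has increments
`√2 · x (3x + 2k - 1) / 2`, strictly increasing in `x ≥ 0`; the rest,
`k · x · √((n - 1)² + (x + k - 1)²)`, is convex on `[0, ∞)` as a product of two nonnegative,
nondecreasing convex functions (the second is the norm of an affine map `ℝ → ℂ`), so its
increments are nondecreasing.
-/

open Real Set

theorem convexOn_sqrt_sq_add_sq (c d : ℝ) :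
    ConvexOn ℝ univ fun x : ℝ => √(c ^ 2 + (x + d) ^ 2) := by
  have h := (convexOn_norm (E := ℂ) convex_univ).comp_affineMap
    (AffineMap.lineMap (c + d * Complex.I) (c + (d + 1) * Complex.I))
  have hnorm : (fun x : ℝ => √(c ^ 2 + (x + d) ^ 2)) =
      norm ∘ AffineMap.lineMap (c + d * Complex.I) (c + (d + 1) * Complex.I) := by
    funext x
    rw [Function.comp_apply, AffineMap.lineMap_apply_module', ← Complex.norm_add_mul_I]
    congr 1
    simp only [Complex.real_smul]
    push_cast
    ring
  rw [hnorm]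
  simpa using h

theorem convexOn_mul_sqrt_sq_add_sq (c : ℝ) {d : ℝ} (hd : 0 ≤ d) :
    ConvexOn ℝ (Ici 0) fun x : ℝ => x * √(c ^ 2 + (x + d) ^ 2) := by
  have hmono : MonotoneOn (fun x : ℝ => √(c ^ 2 + (x + d) ^ 2)) (Ici 0) := by
    intro x hx y _ hxy
    have : 0 ≤ x + d := add_nonneg hx hd
    dsimp only
    gcongr
  exact (convexOn_id (convex_Ici 0)).mul
    ((convexOn_sqrt_sq_add_sq c d).subset (subset_univ _) (convex_Ici 0))
    (fun _ hx => hx) (fun _ _ => sqrt_nonneg _) (monotoneOn_id.monovaryOn hmono)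

theorem ConvexOn.map_add_sub_le {𝕜 : Type*} [Field 𝕜] [LinearOrder 𝕜] [IsStrictOrderedRing 𝕜]
    {s : Set 𝕜} {f : 𝕜 → 𝕜} (hf : ConvexOn 𝕜 s f) {x y h : 𝕜} (hx : x ∈ s) (hyh : y + h ∈ s)
    (hh : 0 < h) (hxy : x ≤ y) : f (x + h) - f x ≤ f (y + h) - f y := by
  have hseg : Icc x (y + h) ⊆ s := hf.1.ordConnected.out hx hyh
  have hxh : x + h ∈ s := hseg ⟨by linarith, by linarith⟩
  have hy : y ∈ s := hseg ⟨hxy, by linarith⟩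
  have left := hf.secant_mono hx hxh hyh (by linarith) (by linarith) (by linarith)
  have right := hf.secant_mono hyh hx hy (by linarith) (by linarith) hxy
  rw [add_sub_cancel_left] at left
  rw [← neg_div_neg_eq, neg_sub, neg_sub, ← neg_div_neg_eq (f y - _), neg_sub, neg_sub,
    add_sub_cancel_left] at right
  exact (div_le_div_iff_of_pos_right hh).1 (left.trans right)

-- The edges meeting `K_a`: `C(a, 2)` inside it, both ends of degree `k + a - 1`, and `k a`
-- to `K_k`, whose vertices have degree `n - 1`.
noncomputable def somborCliqueTerm (k n : ℕ) (a : ℝ) : ℝ :=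
  √2 * (a * (a - 1) / 2) * (k + a - 1) + k * a * √(((n : ℝ) - 1) ^ 2 + (k + a - 1) ^ 2)

theorem fSombor_eq (k n a b : ℕ) :
    fSombor k n a b =
      somborCliqueTerm k n a + √2 * k.choose 2 * ((n : ℝ) - 1) + somborCliqueTerm k n b := by
  simp only [fSombor, somborCliqueTerm, Nat.cast_choose_two]
  ring

theorem somborCliqueTerm_add_one_sub_lt {k : ℕ} (n : ℕ) (hk : 1 ≤ k) {x y : ℝ} (hx : 0 ≤ x)
    (hxy : x < y) :
    somborCliqueTerm k n (x + 1) - somborCliqueTerm k n x <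
      somborCliqueTerm k n (y + 1) - somborCliqueTerm k n y := by
  have hd : (0 : ℝ) ≤ k - 1 := by rw [sub_nonneg]; exact_mod_cast hk
  have hsqrt := (convexOn_mul_sqrt_sq_add_sq ((n : ℝ) - 1) hd).map_add_sub_le hx
    (show y + 1 ∈ Ici 0 by simp only [mem_Ici]; linarith) one_pos hxy.le
  have hpoly : (x + 1) * x / 2 * (k + (x + 1) - 1) - x * (x - 1) / 2 * (k + x - 1) <
      (y + 1) * y / 2 * (k + (y + 1) - 1) - y * (y - 1) / 2 * (k + y - 1) := by
    nlinarith
  have hk0 : (0 : ℝ) ≤ k := by positivity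
  have hshift : ∀ t : ℝ, (k : ℝ) + t - 1 = t + (k - 1) := fun t => by ring
  simp only [somborCliqueTerm, hshift]
  linarith [mul_lt_mul_of_pos_left hpoly (show 0 < √2 by positivity),
    mul_le_mul_of_nonneg_left hsqrt hk0]

theorem fSombor_mono_general (k k₁ k₂ n : ℕ) (hk : 1 ≤ k) (hk₂ : 2 ≤ k₂) (h12 : k₂ ≤ k₁) :
    fSombor k n (k₁ + 1) (k₂ - 1) > fSombor k n k₁ k₂ := by
  have hcast : ((k₂ - 1 : ℕ) : ℝ) + 1 = k₂ := by
    rw [Nat.cast_sub (by omega), Nat.cast_one, sub_add_cancel]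
  have hlt : ((k₂ - 1 : ℕ) : ℝ) < k₁ := by exact_mod_cast (show k₂ - 1 < k₁ by omega)
  have key := somborCliqueTerm_add_one_sub_lt n hk (Nat.cast_nonneg _) hlt
  rw [hcast] at key
  rw [gt_iff_lt, fSombor_eq, fSombor_eq, Nat.cast_add_one]
  linarith

theorem fSombor_mono (k k₁ k₂ n : ℕ) (hk : 1 ≤ k) (hk₂ : 2 ≤ k₂) (h12 : k₂ ≤ k₁)
    (hn : n = k₁ + k + k₂) :
    fSombor k n (k₁ + 1) (k₂ - 1) > fSombor k n k₁ k₂ :=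
  fSombor_mono_general k k₁ k₂ n hk hk₂ h12
end

section
/- For integers n > k + k₁ ≥ k + k₂ − 1 ≥ 0 with k₁ ≥ k₂, one has √((n−1)² + (k+k₁)²)·√((n−1)² + (k+k₂−2)²) > √((n−1)² + (k+k₂−1)²)·√((n−1)² + (k+k₁−1)²). -/
open SimpleGraph

theorem claim1 (n k k₁ k₂ : ℤ) (h0 : 0 ≤ k + k₂ - 1) (h1 : k + k₂ - 1 ≤ k + k₁)
    (h2 : k + k₁ < n) (h3 : k₂ ≤ k₁) :
    Real.sqrt (((n : ℝ) - 1) ^ 2 + ((k : ℝ) + k₁) ^ 2) *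
        Real.sqrt (((n : ℝ) - 1) ^ 2 + ((k : ℝ) + k₂ - 2) ^ 2) >
      Real.sqrt (((n : ℝ) - 1) ^ 2 + ((k : ℝ) + k₂ - 1) ^ 2) *
        Real.sqrt (((n : ℝ) - 1) ^ 2 + ((k : ℝ) + k₁ - 1) ^ 2) := by
  have h0' : (0 : ℝ) ≤ (k : ℝ) + k₂ - 1 := by exact_mod_cast h0
  have h2' : (k : ℝ) + k₁ + 1 ≤ (n : ℝ) := by exact_mod_cast h2
  have h3' : (k₂ : ℝ) ≤ (k₁ : ℝ) := by
    exact_mod_cast h3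
  rw [gt_iff_lt, ← Real.sqrt_mul (by positivity), ← Real.sqrt_mul (by positivity)]
  apply Real.sqrt_lt_sqrt (by positivity)
  have hab : (0:ℝ) < ((k : ℝ) + k₁) - ((k : ℝ) + k₂ - 1) := by linarith
  have hfac : (0:ℝ) < 2 * ((n:ℝ) - 1) ^ 2 - 2 * ((k : ℝ) + k₁) * ((k : ℝ) + k₂ - 1)
      + ((k : ℝ) + k₁) + ((k : ℝ) + k₂ - 1) := by nlinarith
  nlinarith [mul_pos hab hfac]
end
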